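/- There exists a continuous even function u : ℝ → ℝ such that u(0) = 1, 0 < u(x) < 1 for all x ≠ 0, u(x) → 0 as |x| → ∞, u is twice continuously differentiable on ℝ \ {0}, u is strictly decreasing on (0, ∞), and for all x ≠ 0 it satisfies (1 − u(x)²)·u''(x) = u(x) together with the first-order invariant u'(x)² = −log(1 − u(x)²). -/

import Mathlib

/-!
On `x > 0` the invariant reads `u' = -√(-log (1 - u²))`, a separable equation, so the solution
with `u 0 = 1` is the inverse of the descent time `T y = ∫ v in y..1, (√(-log (1 - v²)))⁻¹`.
From `v² ≤ -log (1 - v²) ≤ v² / (1 - v²)` the integrand is at most `1 / v` and at least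
`1 / v - v`, so `T` is finite and decreases from `+∞` at `0⁺` to `T 1 = 0`: its inverse maps
`[0, ∞)` onto `(0, 1]`. Evenly extended, it satisfies the invariant away from the origin, and
differentiating the invariant gives `(1 - u²) u'' = u`, because
`d/dv (-log (1 - v²)) / 2 = v / (1 - v²)`.
-/

open Filter Set Topology MeasureTheory intervalIntegral

theorem sign_sq_of_ne_zero {α : Type*} [Ring α] [LinearOrder α] [IsStrictOrderedRing α] {x : α}
    (hx : x ≠ 0) : (SignType.sign x : α) ^ 2 = 1 := by
  rcases hx.lt_or_gt with h | h <;> simp [h]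

section StrictAntiOn

variable {α β : Type*} [LinearOrder α] [TopologicalSpace α] [OrderTopology α]
  [LinearOrder β] [TopologicalSpace β] [OrderTopology β] [DenselyOrdered β] {f : α → β}
  {s : Set α} {a : α}

theorem StrictAntiOn.continuousAt_of_image_mem_nhds (hf : StrictAntiOn f s) (hs : s ∈ 𝓝 a)
    (hfs : f '' s ∈ 𝓝 (f a)) : ContinuousAt f a :=
  StrictMonoOn.continuousAt_of_image_mem_nhds (β := βᵒᵈ) hf.dual_right hs hfs

theorem StrictAntiOn.continuousWithinAt_right_of_image_mem_nhdsWithin (hf : StrictAntiOn f s)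
    (hs : s ∈ 𝓝[≥] a) (hfs : f '' s ∈ 𝓝[≤] f a) : ContinuousWithinAt f (Ici a) a :=
  StrictMonoOn.continuousWithinAt_right_of_image_mem_nhdsWithin (β := βᵒᵈ) hf.dual_right hs
    hfs

end StrictAntiOn

section AutonomousODE

variable {𝕜 : Type*} [NontriviallyNormedField 𝕜] {f φ : 𝕜 → 𝕜}

theorem contDiffOn_succ_of_hasDerivAt_comp {s t : Set 𝕜} (hs : IsOpen s) (hst : MapsTo f s t)
    (hf : ∀ x ∈ s, HasDerivAt f (φ (f x)) x) {n : ℕ} (hφ : ContDiffOn 𝕜 n φ t) :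
    ContDiffOn 𝕜 (n + 1) f s := by
  have step (m : ℕ) (hfm : ContDiffOn 𝕜 m f s) (hφm : ContDiffOn 𝕜 m φ t) :
      ContDiffOn 𝕜 (m + 1) f s :=
    (contDiffOn_succ_iff_deriv_of_isOpen hs).2
      ⟨fun x hx => (hf x hx).differentiableAt.differentiableWithinAt, by simp,
        (hφm.comp hfm hst).congr fun x hx => (hf x hx).deriv⟩
  induction n with
  | zero =>
    exact step 0 (contDiffOn_zero.2 fun x hx => (hf x hx).continuousAt.continuousWithinAt) hφ
  | succ n ih =>
    exact step (n + 1) (by exact_mod_cast ih (hφ.of_le (by norm_cast; omega))) hφ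

theorem hasDerivAt_deriv_of_hasDerivAt_comp {x φ' : 𝕜}
    (hf : ∀ᶠ z in 𝓝 x, HasDerivAt f (φ (f z)) z) (hφ : HasDerivAt φ φ' (f x)) :
    HasDerivAt (deriv f) (φ' * φ (f x)) x :=
  (hφ.comp x hf.self_of_nhds).congr_of_eventuallyEq (hf.mono fun _ hz => hz.deriv)

end AutonomousODE

namespace CuspedSoliton

noncomputable def slopeSq (v : ℝ) : ℝ := -Real.log (1 - v ^ 2)

noncomputable def slope (v : ℝ) : ℝ := √(slopeSq v)

variable {v : ℝ}

theorem one_sub_sq_pos (hv : v ∈ Ioo (0 : ℝ) 1) : 0 < 1 - v ^ 2 := by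
  nlinarith [hv.1, hv.2]

theorem sq_le_slopeSq (hv : v ∈ Ioo (0 : ℝ) 1) : v ^ 2 ≤ slopeSq v := by
  have := Real.log_le_sub_one_of_pos (one_sub_sq_pos hv)
  unfold slopeSq; linarith

theorem slopeSq_le (hv : v ∈ Ioo (0 : ℝ) 1) : slopeSq v ≤ v ^ 2 / (1 - v ^ 2) := by
  have h := one_sub_sq_pos hv
  have := Real.one_sub_inv_le_log_of_pos h
  have hinv : 1 - (1 - v ^ 2)⁻¹ = -(v ^ 2 / (1 - v ^ 2)) := by field_simp; ring
  unfold slopeSq; linarith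

theorem slopeSq_pos (hv : v ∈ Ioo (0 : ℝ) 1) : 0 < slopeSq v :=
  (pow_pos hv.1 2).trans_le (sq_le_slopeSq hv)

theorem slope_pos (hv : v ∈ Ioo (0 : ℝ) 1) : 0 < slope v :=
  Real.sqrt_pos.2 (slopeSq_pos hv)

theorem slope_sq (hv : v ∈ Ioo (0 : ℝ) 1) : slope v ^ 2 = slopeSq v :=
  Real.sq_sqrt ((sq_nonneg v).trans (sq_le_slopeSq hv))

theorem slope_nonneg (v : ℝ) : 0 ≤ slope v := Real.sqrt_nonneg _

-- Junk value (`Real.log 0 = 0`), harmless since `{1}` is null for the integral below.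
theorem slope_one : slope 1 = 0 := by simp [slope, slopeSq]

theorem inv_slope_le (hv : v ∈ Ioc (0 : ℝ) 1) : (slope v)⁻¹ ≤ v⁻¹ := by
  rcases hv.2.lt_or_eq with hv1 | rfl
  · exact inv_anti₀ hv.1 (Real.le_sqrt_of_sq_le (sq_le_slopeSq ⟨hv.1, hv1⟩))
  · simp [slope_one]

theorem inv_sub_le_inv_slope (hv : v ∈ Ioc (0 : ℝ) 1) : v⁻¹ - v ≤ (slope v)⁻¹ := by
  rcases hv.2.lt_or_eq with hv1 | rfl
  · have hv' : v ∈ Ioo (0 : ℝ) 1 := ⟨hv.1, hv1⟩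
    have h := one_sub_sq_pos hv'
    have hle : slope v ≤ v / (1 - v ^ 2) := by
      refine Real.sqrt_le_iff.2 ⟨div_nonneg hv.1.le h.le, (slopeSq_le hv').trans ?_⟩
      rw [div_pow]
      exact div_le_div_of_nonneg_left (sq_nonneg v) (pow_pos h 2) (by nlinarith)
    calc v⁻¹ - v = (v / (1 - v ^ 2))⁻¹ := by field_simp
      _ ≤ (slope v)⁻¹ := inv_anti₀ (slope_pos hv') hle
  · simp [slope_one]

theorem contDiffAt_slope {n : WithTop ℕ∞} (hv : v ∈ Ioo (0 : ℝ) 1) :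
    ContDiffAt ℝ n slope v :=
  ((contDiffAt_const.sub (contDiffAt_id.pow 2)).log (one_sub_sq_pos hv).ne').neg.sqrt
    (slopeSq_pos hv).ne'

theorem hasDerivAt_slopeSq (hv : 1 - v ^ 2 ≠ 0) :
    HasDerivAt slopeSq (2 * v / (1 - v ^ 2)) v := by
  refine (((hasDerivAt_pow 2 v).const_sub 1).log hv).neg.congr_deriv ?_
  push_cast
  ring

theorem hasDerivAt_slope (hv : v ∈ Ioo (0 : ℝ) 1) :
    HasDerivAt slope (v / ((1 - v ^ 2) * slope v)) v := by
  refine ((hasDerivAt_slopeSq (one_sub_sq_pos hv).ne').sqrt (slopeSq_pos hv).ne').congr_deriv ?_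
  have := (slope_pos hv).ne'
  rw [show √(slopeSq v) = slope v from rfl]
  field_simp

noncomputable def descentTime (y : ℝ) : ℝ := ∫ v in y..1, (slope v)⁻¹

theorem intervalIntegrable_inv_slope {a b : ℝ} (ha : a ∈ Ioc (0 : ℝ) 1)
    (hb : b ∈ Ioc (0 : ℝ) 1) :
    IntervalIntegrable (fun v => (slope v)⁻¹) volume a b := by
  have hsub : uIcc a b ⊆ Ioc 0 1 := (ordConnected_Ioc).uIcc_subset ha hb
  have hmeas : Measurable fun v => (slope v)⁻¹ := by unfold slope slopeSq; fun_prop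
  refine (intervalIntegrable_inv (f := id) (fun v hv => (hsub hv).1.ne')
    continuousOn_id).mono_fun hmeas.aestronglyMeasurable ?_
  refine (ae_restrict_mem measurableSet_uIoc).mono fun v hv => ?_
  have hv' := hsub (uIoc_subset_uIcc hv)
  simp only [Real.norm_eq_abs, id]
  rw [abs_of_nonneg (inv_nonneg.2 (slope_nonneg v)), abs_of_pos (inv_pos.2 hv'.1)]
  exact inv_slope_le hv'

theorem descentTime_one : descentTime 1 = 0 := integral_same

theorem descentTime_nonneg {y : ℝ} (hy : y ≤ 1) : 0 ≤ descentTime y :=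
  integral_nonneg hy fun v _ => inv_nonneg.2 (slope_nonneg v)

theorem hasDerivAt_descentTime {y : ℝ} (hy : y ∈ Ioo (0 : ℝ) 1) :
    HasDerivAt descentTime (-(slope y)⁻¹) y := by
  have hcont : ContinuousOn (fun v => (slope v)⁻¹) (Ioo 0 1) := fun v hv =>
    ((contDiffAt_slope (n := 0) hv).continuousAt.inv₀ (slope_pos hv).ne').continuousWithinAt
  exact integral_hasDerivAt_left
    (intervalIntegrable_inv_slope (Ioo_subset_Ioc_self hy) ⟨one_pos, le_rfl⟩)
    (hcont.stronglyMeasurableAtFilter isOpen_Ioo y hy)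
    (hcont.continuousAt (isOpen_Ioo.mem_nhds hy))

theorem strictAntiOn_descentTime : StrictAntiOn descentTime (Ioc 0 1) := by
  intro a ha b hb hab
  have h1 : IntervalIntegrable (fun v => (slope v)⁻¹) volume b 1 :=
    intervalIntegrable_inv_slope hb ⟨one_pos, le_rfl⟩
  have hsplit := integral_add_adjacent_intervals (intervalIntegrable_inv_slope ha hb) h1
  have hpos : 0 < ∫ v in a..b, (slope v)⁻¹ :=
    intervalIntegral_pos_of_pos_on (intervalIntegrable_inv_slope ha hb)
      (fun v hv => inv_pos.2 (slope_pos ⟨ha.1.trans hv.1, hv.2.trans_le hb.2⟩)) hab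
  unfold descentTime
  linarith

theorem neg_log_sub_half_le_descentTime {y : ℝ} (hy : y ∈ Ioc (0 : ℝ) 1) :
    -Real.log y - 1 / 2 ≤ descentTime y := by
  have hinv : IntervalIntegrable (fun v : ℝ => v⁻¹) volume y 1 :=
    intervalIntegrable_inv (f := id)
      (fun v hv => (hy.1.trans_le (by rw [uIcc_of_le hy.2] at hv; exact hv.1)).ne') continuousOn_id
  calc -Real.log y - 1 / 2 ≤ ∫ v in y..1, (v⁻¹ - v) := by
        rw [integral_sub hinv intervalIntegrable_id, integral_inv_of_pos hy.1 one_pos, integral_id,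
          Real.log_div one_ne_zero hy.1.ne', Real.log_one]
        nlinarith [hy.1]
    _ ≤ descentTime y :=
      integral_mono_on hy.2 (hinv.sub intervalIntegrable_id)
        (intervalIntegrable_inv_slope hy ⟨one_pos, le_rfl⟩)
        fun v hv => inv_sub_le_inv_slope ⟨hy.1.trans_le hv.1, hv.2⟩

theorem continuousOn_descentTime {a : ℝ} (ha : a ∈ Ioc (0 : ℝ) 1) :
    ContinuousOn descentTime (Icc a 1) := by
  rw [← uIcc_of_le ha.2]
  exact continuousOn_primitive_interval_left <| (intervalIntegrable_iff' (by simp)).1 <|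
    intervalIntegrable_inv_slope ha ⟨one_pos, le_rfl⟩

theorem bijOn_descentTime : BijOn descentTime (Ioc 0 1) (Ici 0) := by
  refine ⟨fun y hy => descentTime_nonneg hy.2, strictAntiOn_descentTime.injOn, fun x hx => ?_⟩
  set a := Real.exp (-(x + 1))
  have ha : a ∈ Ioc (0 : ℝ) 1 :=
    ⟨Real.exp_pos _, Real.exp_le_one_iff.2 (by linarith [mem_Ici.1 hx])⟩
  have hxa : x ≤ descentTime a := by
    have := neg_log_sub_half_le_descentTime ha
    rw [Real.log_exp] at this
    linarith
  obtain ⟨y, hy, rfl⟩ := intermediate_value_Icc' ha.2 (continuousOn_descentTime ha)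
    ⟨descentTime_one ▸ hx, hxa⟩
  exact ⟨y, ⟨ha.1.trans_le hy.1, hy.2⟩, rfl⟩

-- `Function.invFunOn` gives junk on `Iio 0`; only `profile |x|` is used.
noncomputable def profile : ℝ → ℝ := Function.invFunOn descentTime (Ioc 0 1)

theorem invOn_profile : InvOn profile descentTime (Ioc 0 1) (Ici 0) :=
  bijOn_descentTime.invOn_invFunOn

theorem bijOn_profile : BijOn profile (Ici 0) (Ioc 0 1) :=
  bijOn_descentTime.symm invOn_profile.symm

theorem profile_zero : profile 0 = 1 := by
  simpa [descentTime_one] using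
    invOn_profile.1 (show (1 : ℝ) ∈ Ioc 0 1 from ⟨one_pos, le_rfl⟩)

theorem strictAntiOn_profile : StrictAntiOn profile (Ici 0) := fun x hx y hy hxy =>
  (strictAntiOn_descentTime.lt_iff_gt (bijOn_profile.mapsTo hx) (bijOn_profile.mapsTo hy)).1
    (by rwa [invOn_profile.2 hx, invOn_profile.2 hy])

theorem profile_mem_Ioo {x : ℝ} (hx : 0 < x) : profile x ∈ Ioo 0 1 :=
  ⟨(bijOn_profile.mapsTo hx.le).1,
    profile_zero ▸ strictAntiOn_profile self_mem_Ici (mem_Ici.2 hx.le) hx⟩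

theorem continuousOn_profile : ContinuousOn profile (Ici 0) := by
  intro x hx
  rcases (mem_Ici.1 hx).eq_or_lt with rfl | hx
  · refine strictAntiOn_profile.continuousWithinAt_right_of_image_mem_nhdsWithin
      self_mem_nhdsWithin ?_
    rw [bijOn_profile.image_eq, profile_zero]
    exact Ioc_mem_nhdsLE one_pos
  · refine (strictAntiOn_profile.continuousAt_of_image_mem_nhds (Ici_mem_nhds hx)
      ?_).continuousWithinAt
    rw [bijOn_profile.image_eq]
    exact Ioc_mem_nhds (profile_mem_Ioo hx).1 (profile_mem_Ioo hx).2

theorem tendsto_profile_atTop : Tendsto profile atTop (𝓝 0) := by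
  refine tendsto_order.2 ⟨fun a ha => ?_, fun b hb => ?_⟩
  · filter_upwards [eventually_ge_atTop 0] with x hx
    exact ha.trans (bijOn_profile.mapsTo hx).1
  · have hc : min b 1 ∈ Ioc (0 : ℝ) 1 := ⟨lt_min hb one_pos, min_le_right _ _⟩
    have hT := bijOn_descentTime.mapsTo hc
    filter_upwards [eventually_gt_atTop (descentTime (min b 1))] with x hx
    calc profile x < profile (descentTime (min b 1)) :=
          strictAntiOn_profile hT (mem_Ici.2 ((mem_Ici.1 hT).trans hx.le)) hx
      _ = min b 1 := invOn_profile.1 hc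
      _ ≤ b := min_le_left _ _

theorem hasDerivAt_profile {x : ℝ} (hx : 0 < x) : HasDerivAt profile (-slope (profile x)) x := by
  have hinv := HasDerivAt.of_local_left_inverse
    (continuousOn_profile.continuousAt (Ici_mem_nhds hx))
    (hasDerivAt_descentTime (profile_mem_Ioo hx))
    (neg_ne_zero.2 (inv_ne_zero (slope_pos (profile_mem_Ioo hx)).ne'))
    (eventually_ge_nhds hx |>.mono fun z hz => invOn_profile.2 hz)
  rwa [inv_neg, inv_inv] at hinv

theorem contDiffOn_profile : ContDiffOn ℝ 2 profile (Ioi 0) :=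
  contDiffOn_succ_of_hasDerivAt_comp (n := 1) isOpen_Ioi (fun _ => profile_mem_Ioo)
    (fun _ => hasDerivAt_profile) fun _ hv => (contDiffAt_slope hv).neg.contDiffWithinAt

noncomputable def solution (x : ℝ) : ℝ := profile |x|

theorem continuous_solution : Continuous solution :=
  continuousOn_profile.comp_continuous continuous_abs abs_nonneg

theorem solution_neg (x : ℝ) : solution (-x) = solution x := by simp [solution]

theorem solution_zero : solution 0 = 1 := by simp [solution, profile_zero]

theorem solution_mem_Ioo {x : ℝ} (hx : x ≠ 0) : solution x ∈ Ioo 0 1 :=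
  profile_mem_Ioo (abs_pos.2 hx)

theorem tendsto_solution_cocompact : Tendsto solution (cocompact ℝ) (𝓝 0) :=
  tendsto_profile_atTop.comp tendsto_norm_cocompact_atTop

theorem contDiffOn_solution : ContDiffOn ℝ 2 solution {0}ᶜ := fun x hx =>
  ((contDiffOn_profile.contDiffAt (Ioi_mem_nhds (abs_pos.2 hx))).comp x
    (contDiffAt_abs hx)).contDiffWithinAt

theorem strictAntiOn_solution : StrictAntiOn solution (Ioi 0) :=
  (strictAntiOn_profile.mono Ioi_subset_Ici_self).congr fun x hx => by
    simp [solution, abs_of_pos (mem_Ioi.1 hx)]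

theorem hasDerivAt_solution {x : ℝ} (hx : x ≠ 0) :
    HasDerivAt solution (-SignType.sign x * slope (solution x)) x :=
  ((hasDerivAt_profile (abs_pos.2 hx)).comp x (hasDerivAt_abs hx)).congr_deriv (by
    simp only [solution]; ring)

theorem eventually_hasDerivAt_solution {x : ℝ} (hx : x ≠ 0) :
    ∀ᶠ z in 𝓝 x, HasDerivAt solution (-SignType.sign x * slope (solution z)) z := by
  filter_upwards [eventually_ne_nhds hx,
    (continuousAt_sign_of_ne_zero hx).eventually_mem
      (isOpen_discrete {SignType.sign x} |>.mem_nhds rfl)]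
    with z hz hsign
  rw [← mem_singleton_iff.1 hsign]
  exact hasDerivAt_solution hz

theorem hasDerivAt_deriv_solution {x : ℝ} (hx : x ≠ 0) :
    HasDerivAt (deriv solution) (solution x / (1 - solution x ^ 2)) x := by
  have hmem := solution_mem_Ioo hx
  refine (hasDerivAt_deriv_of_hasDerivAt_comp (eventually_hasDerivAt_solution hx)
    ((hasDerivAt_slope hmem).const_mul _)).congr_deriv ?_
  have := (slope_pos hmem).ne'
  have := (one_sub_sq_pos hmem).ne'
  field_simp
  linear_combination solution x * sign_sq_of_ne_zero hx

theorem one_sub_sq_mul_deriv_deriv_solution {x : ℝ} (hx : x ≠ 0) :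
    (1 - solution x ^ 2) * deriv (deriv solution) x = solution x := by
  rw [(hasDerivAt_deriv_solution hx).deriv]
  field_simp [(one_sub_sq_pos (solution_mem_Ioo hx)).ne']

theorem deriv_solution_sq {x : ℝ} (hx : x ≠ 0) :
    deriv solution x ^ 2 = -Real.log (1 - solution x ^ 2) := by
  rw [(hasDerivAt_solution hx).deriv, mul_pow, neg_sq, sign_sq_of_ne_zero hx, one_mul,
    slope_sq (solution_mem_Ioo hx), slopeSq]

end CuspedSoliton

theorem exists_cusped_soliton :
    ∃ u : ℝ → ℝ,
      Continuous u ∧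
      (∀ x : ℝ, u (-x) = u x) ∧
      u 0 = 1 ∧
      (∀ x : ℝ, x ≠ 0 → 0 < u x ∧ u x < 1) ∧
      Tendsto u (cocompact ℝ) (nhds 0) ∧
      ContDiffOn ℝ 2 u {(0 : ℝ)}ᶜ ∧
      StrictAntiOn u (Ioi 0) ∧
      (∀ x : ℝ, x ≠ 0 → (1 - u x ^ 2) * deriv (deriv u) x = u x) ∧
      (∀ x : ℝ, x ≠ 0 → (deriv u x) ^ 2 = -Real.log (1 - u x ^ 2)) := by
  open CuspedSoliton in
  exact ⟨solution, continuous_solution, solution_neg, solution_zero,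
    fun _ hx => solution_mem_Ioo hx, tendsto_solution_cocompact, contDiffOn_solution,
    strictAntiOn_solution, fun _ hx => one_sub_sq_mul_deriv_deriv_solution hx,
    fun _ hx => deriv_solution_sq hx⟩
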